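/- arXiv:2401.15525 — 2 statements merged into one kernel-verified Lean document; each statement's English description precedes it below -/
import Mathlib

section
/- Suppose real numbers κc, κd, π_i, π_j, η, τ with η > 0 and τ > 0, and sequences ωc, ωd, ρ̄c, ρ̄d of nonnegative reals indexed by {i, i+1, …, T}, satisfy: (1) κc + π_i + (−∑_{n=i+1}^{T}(ωd_n − ωc_n) + ωc_i)·η·τ + ρ̄c_i = 0; (2) κd − π_j + (∑_{n=j+1}^{T}(ωd_n − ωc_n) + ωd_j)·τ + ρ̄d_j = 0; (3) ωd_n = 0 for all n with i+1 ≤ n ≤ j−1 and ωd_i = 0; and ωc_n ≥ 0 for all n. Then π_i + κc − η·(π_j − κd) ≤ 0. -/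
/-!
Adding `η` times the discharge condition (2) to the charge condition (1), the tail sums over
`(j, T]` cancel. What is left of the sum over `(i, T]` is the window `(i, j]`, where `ωd`
vanishes except at `j`, and that term cancels as well. Hence `π_i + κc - η (π_j - κd)` equals
minus a sum of nonnegative multiplier terms.
-/

open Finset

theorem sum_Icc_add_one_eq_sum_Ioc_add_sum_Icc_add_one {M : Type*} [AddCommMonoid M]
    (f : ℕ → M) {i j T : ℕ} (hij : i ≤ j) (hjT : j ≤ T) :
    ∑ n ∈ Icc (i + 1) T, f n = ∑ n ∈ Ioc i j, f n + ∑ n ∈ Icc (j + 1) T, f n := by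
  rw [Icc_add_one_left_eq_Ioc, Icc_add_one_left_eq_Ioc, sum_Ioc_consecutive f hij hjT]

theorem sum_Ioc_eq_right_of_eq_zero_on_Ioo {M : Type*} [AddCommMonoid M] {f : ℕ → M}
    {i j : ℕ} (hij : i < j) (hf : ∀ n ∈ Ioo i j, f n = 0) :
    ∑ n ∈ Ioc i j, f n = f j :=
  sum_eq_single_of_mem j (right_mem_Ioc.2 hij) fun n hn hnj =>
    hf n (mem_Ioo.2 ⟨(mem_Ioc.1 hn).1, (mem_Ioc.1 hn).2.lt_of_ne hnj⟩)

theorem charge_discharge_price_coupling_general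
    (κc κd πi πj η τ : ℝ) (hη : 0 < η) (hτ : 0 < τ)
    (i j T : ℕ) (hij : i < j) (hjT : j ≤ T)
    (ωc ωd ρc ρd : ℕ → ℝ)
    (hωc : ∀ n, 0 ≤ ωc n)
    (hρc : ∀ n, 0 ≤ ρc n) (hρd : ∀ n, 0 ≤ ρd n)
    (heq1 : κc + πi +
        (-(∑ n ∈ Finset.Icc (i + 1) T, (ωd n - ωc n)) + ωc i) * η * τ + ρc i = 0)
    (heq2 : κd - πj +
        ((∑ n ∈ Finset.Icc (j + 1) T, (ωd n - ωc n)) + ωd j) * τ + ρd j = 0)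
    (hωd0 : ∀ n, i + 1 ≤ n → n ≤ j - 1 → ωd n = 0) :
    πi + κc - η * (πj - κd) ≤ 0 := by
  have hωd_gap : ∀ n ∈ Ioo i j, ωd n = 0 := fun n hn =>
    hωd0 n (mem_Ioo.1 hn).1 (Nat.le_sub_one_of_lt (mem_Ioo.1 hn).2)
  set A := ∑ n ∈ Ioc i j, ωc n
  have hA : 0 ≤ A := sum_nonneg fun n _ => hωc n
  have hsplit : ∑ n ∈ Icc (i + 1) T, (ωd n - ωc n)
      = ωd j - A + ∑ n ∈ Icc (j + 1) T, (ωd n - ωc n) := by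
    rw [sum_Icc_add_one_eq_sum_Ioc_add_sum_Icc_add_one _ hij.le hjT, sum_sub_distrib,
      sum_Ioc_eq_right_of_eq_zero_on_Ioo hij hωd_gap]
  have hcoupled : πi + κc - η * (πj - κd) = -((A + ωc i) * η * τ + ρc i + η * ρd j) := by
    rw [hsplit] at heq1
    linear_combination heq1 + η * heq2
  have hmultipliers : 0 ≤ (A + ωc i) * η * τ + ρc i + η * ρd j :=
    add_nonneg (add_nonneg (mul_nonneg (mul_nonneg (add_nonneg hA (hωc i)) hη.le) hτ.le) (hρc i))
      (mul_nonneg hη.le (hρd j))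
  rw [hcoupled]
  exact neg_nonpos.2 hmultipliers

/-- Charge-then-discharge price coupling lemma. -/
theorem charge_discharge_price_coupling
    (κc κd πi πj η τ : ℝ) (hη : 0 < η) (hτ : 0 < τ)
    (i j T : ℕ) (hij : i < j) (hjT : j ≤ T)
    (ωc ωd ρc ρd : ℕ → ℝ)
    (hωc : ∀ n, 0 ≤ ωc n) (hωd : ∀ n, 0 ≤ ωd n)
    (hρc : ∀ n, 0 ≤ ρc n) (hρd : ∀ n, 0 ≤ ρd n)
    (heq1 : κc + πi +
        (-(∑ n ∈ Finset.Icc (i + 1) T, (ωd n - ωc n)) + ωc i) * η * τ + ρc i = 0)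
    (heq2 : κd - πj +
        ((∑ n ∈ Finset.Icc (j + 1) T, (ωd n - ωc n)) + ωd j) * τ + ρd j = 0)
    (hωd0 : ∀ n, i + 1 ≤ n → n ≤ j - 1 → ωd n = 0)
    (hωdi : ωd i = 0) :
    πi + κc - η * (πj - κd) ≤ 0 :=
  charge_discharge_price_coupling_general κc κd πi πj η τ hη hτ i j T hij hjT ωc ωd ρc ρd hωc hρc
    hρd heq1 heq2 hωd0
end

section
/- Suppose real numbers κc, κd, π_i, π_j, η > 0, τ > 0, and sequences ωc, ωd, ρ̄c, ρ̄d of nonnegative reals satisfy: (1) κc + π_j + (−∑_{n=j+1}^{T}(ωd_n − ωc_n) + ωc_j)·η·τ + ρ̄c_j = 0; (2) κd − π_i + (∑_{n=i+1}^{T}(ωd_n − ωc_n) + ωd_i)·τ + ρ̄d_i = 0; and complementary slackness gives ωd_n ≥ 0 with ωc_n = 0 for i+1 ≤ n ≤ j−1 and ωc_i = 0 in the discharge-first regime. Then π_j + κc − η·(π_i − κd) ≤ 0. -/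
/-- Discharge-then-charge price coupling lemma. -/
theorem discharge_charge_price_coupling
    (κc κd πi πj η τ : ℝ) (hη : 0 < η) (hτ : 0 < τ)
    (i j T : ℕ) (hij : i < j) (hjT : j ≤ T)
    (ωc ωd ρc ρd : ℕ → ℝ)
    (hωc : ∀ n, 0 ≤ ωc n) (hωd : ∀ n, 0 ≤ ωd n)
    (hρc : ∀ n, 0 ≤ ρc n) (hρd : ∀ n, 0 ≤ ρd n)
    (heq1 : κc + πj +
        (-(∑ n ∈ Finset.Icc (j + 1) T, (ωd n - ωc n)) + ωc j) * η * τ + ρc j = 0)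
    (heq2 : κd - πi +
        ((∑ n ∈ Finset.Icc (i + 1) T, (ωd n - ωc n)) + ωd i) * τ + ρd i = 0)
    (hωc0 : ∀ n, i + 1 ≤ n → n ≤ j - 1 → ωc n = 0)
    (hωci : ωc i = 0) :
    πj + κc - η * (πi - κd) ≤ 0 := by
  rw [Finset.Icc_add_one_left_eq_Ioc] at heq1 heq2
  have hsplit : (∑ n ∈ Finset.Ioc i j, (ωd n - ωc n))
      + (∑ n ∈ Finset.Ioc j T, (ωd n - ωc n))
      = ∑ n ∈ Finset.Ioc i T, (ωd n - ωc n) :=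
    Finset.sum_Ioc_consecutive _ hij.le hjT
  have hsumc : (∑ n ∈ Finset.Ioc i j, ωc n) = ωc j := by
    refine Finset.sum_eq_single_of_mem j (Finset.mem_Ioc.mpr ⟨hij, le_rfl⟩) ?_
    intro n hn hne
    have hn' := Finset.mem_Ioc.mp hn
    exact hωc0 n hn'.1 (Nat.le_sub_one_of_lt (lt_of_le_of_ne hn'.2 hne))
  have hsumd : 0 ≤ ∑ n ∈ Finset.Ioc i j, ωd n :=
    Finset.sum_nonneg fun n _ => hωd n
  have hB : -ωc j ≤ ∑ n ∈ Finset.Ioc i j, (ωd n - ωc n) := by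
    rw [Finset.sum_sub_distrib, hsumc]
    linarith
  set A := ∑ n ∈ Finset.Ioc j T, (ωd n - ωc n)
  set B := ∑ n ∈ Finset.Ioc i j, (ωd n - ωc n)
  have hI : (∑ n ∈ Finset.Ioc i T, (ωd n - ωc n)) = B + A := hsplit.symm
  rw [hI] at heq2
  nlinarith [mul_pos hη hτ, hρc j, hρd i, hωd i, hωc j,
    mul_le_mul_of_nonneg_right (mul_le_mul_of_nonneg_left hB hη.le) hτ.le,
    mul_nonneg (mul_nonneg hη.le (hωd i)) hτ.le, mul_nonneg hη.le (hρd i)]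
end
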